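/- arXiv:1304.0994 — 3 statements merged into one kernel-verified Lean document; each statement's English description precedes it below -/
import Mathlib

section
/- Let Λ : (0,1] → ℝ be a positive decreasing differentiable function with Λ(0⁺) = +∞ and t·Λ(t) → 0 as t → 0⁺. Then the integrals ∫_0 √(Λ(t)/t) dt and ∫_0 |Λ'(t)| √(t/Λ(t)) dt converge or diverge simultaneously. -/
open Set Filter MeasureTheory Topology

/-!
With `F t = 2 √(t Λ t)` one has `F' = √(Λ/t) - |Λ'| √(t/Λ)`, since `Λ' ≤ 0`. Both terms are
nonnegative and `F` extends continuously to `[0, ε]` by `F 0 = 0`, because `t Λ t → 0`.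
Hence, if `√(Λ/t)` is integrable, `∫₀ᵗ √(Λ/t) - F` is a continuous function with nonnegative
derivative `|Λ'| √(t/Λ)`, which is therefore integrable; conversely, the fundamental theorem
of calculus on `[c, ε]` bounds `∫_c^ε √(Λ/t)` by `∫_0^ε |Λ'| √(t/Λ) + 2 sup |F|`, uniformly in
`c > 0`.
-/

theorem AntitoneOn.deriv_nonpos_of_mem_nhds {f : ℝ → ℝ} {s : Set ℝ} {t : ℝ}
    (hf : AntitoneOn f s) (hs : s ∈ 𝓝 t) : deriv f t ≤ 0 :=
  (derivWithin_of_mem_nhds (f := f) hs) ▸ hf.derivWithin_nonpos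

theorem hasDerivAt_two_mul_sqrt_mul {f : ℝ → ℝ} {f' t : ℝ} (hf : HasDerivAt f f' t)
    (ht : 0 < t) (hft : 0 < f t) :
    HasDerivAt (fun s => 2 * √(s * f s)) (√(f t / t) + f' * √(t / f t)) t := by
  have hsqrt := (((hasDerivAt_id' t).fun_mul hf).sqrt (mul_pos ht hft).ne').const_mul 2
  refine hsqrt.congr_deriv ?_
  rw [Real.sqrt_mul ht.le, Real.sqrt_div hft.le, Real.sqrt_div ht.le]
  field_simp
  rw [Real.sq_sqrt ht.le, Real.sq_sqrt hft.le]
  ring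

theorem integrableOn_Ioc_subtrahend_of_hasDerivAt_sub {F g h : ℝ → ℝ} {a b : ℝ} (hab : a ≤ b)
    (hF : ContinuousOn F (Icc a b)) (hF' : ∀ t ∈ Ioo a b, HasDerivAt F (g t - h t) t)
    (hg : ContinuousOn g (Ioo a b)) (hgi : IntegrableOn g (Ioc a b))
    (hh : ∀ t ∈ Ioo a b, 0 ≤ h t) : IntegrableOn h (Ioc a b) := by
  have hgi' : IntegrableOn g (uIcc a b) := by
    rwa [uIcc_of_le hab, integrableOn_Icc_iff_integrableOn_Ioc]
  have hΦ : ContinuousOn (fun t => (∫ s in a..t, g s) - F t) (Icc a b) := by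
    refine ContinuousOn.sub ?_ hF
    simpa [uIcc_of_le hab] using intervalIntegral.continuousOn_primitive_interval hgi'
  refine intervalIntegral.integrableOn_deriv_of_nonneg hΦ (fun t ht => ?_) hh
  have hprim : HasDerivAt (fun u => ∫ s in a..u, g s) (g t) t :=
    intervalIntegral.integral_hasDerivAt_right
      ((intervalIntegrable_iff_integrableOn_Ioc_of_le ht.1.le).2
        (hgi.mono_set (Ioc_subset_Ioc_right ht.2.le)))
      (hg.stronglyMeasurableAtFilter isOpen_Ioo t ht) (hg.continuousAt (isOpen_Ioo.mem_nhds ht))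
  simpa using hprim.fun_sub (hF' t ht)

theorem integrableOn_Ioc_minuend_of_hasDerivAt_sub {F g h : ℝ → ℝ} {a b : ℝ} (hab : a < b)
    (hF : ContinuousOn F (Icc a b)) (hF' : ∀ t ∈ Ioo a b, HasDerivAt F (g t - h t) t)
    (hg : ContinuousOn g (Ioc a b)) (hg0 : ∀ t ∈ Ioc a b, 0 ≤ g t)
    (hh : IntegrableOn h (Ioc a b)) : IntegrableOn g (Ioc a b) := by
  obtain ⟨C, hC⟩ := isCompact_Icc.exists_bound_of_continuousOn hF
  obtain ⟨c, -, hc, hca⟩ := exists_seq_strictAnti_tendsto' hab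
  have hgi : ∀ n, IntegrableOn g (Ioc (c n) b) := fun n =>
    ((hg.mono fun t ht => ⟨(hc n).1.trans_le ht.1, ht.2⟩).integrableOn_Icc).mono_set
      Ioc_subset_Icc_self
  refine integrableOn_Ioc_of_intervalIntegral_norm_bounded_left
    (I := 2 * C + ∫ t in Ioc a b, ‖h t‖) hgi hca (Eventually.of_forall fun n => ?_)
  have hcb : c n ≤ b := (hc n).2.le
  have hsub : Ioc (c n) b ⊆ Ioc a b := Ioc_subset_Ioc_left (hc n).1.le
  have ftc : ∫ t in c n..b, (g t - h t) = F b - F (c n) :=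
    intervalIntegral.integral_eq_sub_of_hasDerivAt_of_le hcb
      (hF.mono (Icc_subset_Icc_left (hc n).1.le)) (fun t ht => hF' t ⟨(hc n).1.trans ht.1, ht.2⟩)
      ((intervalIntegrable_iff_integrableOn_Ioc_of_le hcb).2 ((hgi n).sub (hh.mono_set hsub)))
  have hFC : F b - F (c n) ≤ 2 * C := by
    linarith [(abs_le.1 (hC b (right_mem_Icc.2 hab.le))).2,
      (abs_le.1 (hC (c n) ⟨(hc n).1.le, hcb⟩)).1]
  have hhC : ∫ t in Ioc (c n) b, h t ≤ ∫ t in Ioc a b, ‖h t‖ :=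
    (le_abs_self _).trans <| (norm_integral_le_integral_norm _).trans <|
      setIntegral_mono_set hh.norm (ae_of_all _ fun _ => norm_nonneg _) hsub.eventuallyLE
  calc ∫ t in Ioc (c n) b, ‖g t‖ = ∫ t in Ioc (c n) b, g t :=
        setIntegral_congr_fun measurableSet_Ioc fun t ht => Real.norm_of_nonneg (hg0 t (hsub ht))
    _ = (F b - F (c n)) + ∫ t in Ioc (c n) b, h t := by
        rw [← ftc, intervalIntegral.integral_of_le hcb, integral_sub (hgi n) (hh.mono_set hsub)]
        ring
    _ ≤ 2 * C + ∫ t in Ioc a b, ‖h t‖ := add_le_add hFC hhC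

theorem integrableOn_sqrt_div_iff {Λ : ℝ → ℝ}
    (hpos : ∀ t ∈ Ioc (0:ℝ) 1, 0 < Λ t)
    (hanti : AntitoneOn Λ (Ioc (0:ℝ) 1))
    (hdiff : ∀ t ∈ Ioc (0:ℝ) 1, DifferentiableAt ℝ Λ t)
    (hsmall : Tendsto (fun t => t * Λ t) (𝓝[>] 0) (𝓝 0)) {ε : ℝ} (hε : 0 < ε) (hε1 : ε ≤ 1) :
    IntegrableOn (fun t => √(Λ t / t)) (Ioc 0 ε) ↔
      IntegrableOn (fun t => |deriv Λ t| * √(t / Λ t)) (Ioc 0 ε) := by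
  have hsub : Ioc 0 ε ⊆ Ioc (0:ℝ) 1 := Ioc_subset_Ioc_right hε1
  have hF : ContinuousOn (fun t => 2 * √(t * Λ t)) (Icc 0 ε) := by
    intro t ht
    rcases ht.1.eq_or_lt with rfl | ht0
    · refine (continuousWithinAt_Ioi_iff_Ici.1 ?_).mono Icc_subset_Ici_self
      have hsqrt : Continuous fun x : ℝ => 2 * √x := by fun_prop
      simpa [ContinuousWithinAt, Function.comp_def] using (hsqrt.tendsto 0).comp hsmall
    · exact (continuousAt_id.mul (hdiff t (hsub ⟨ht0, ht.2⟩)).continuousAt).sqrt.const_mul 2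
        |>.continuousWithinAt
  have hF' : ∀ t ∈ Ioo 0 ε, HasDerivAt (fun t => 2 * √(t * Λ t))
      (√(Λ t / t) - |deriv Λ t| * √(t / Λ t)) t := by
    intro t ht
    have ht1 : t ∈ Ioo (0:ℝ) 1 := ⟨ht.1, ht.2.trans_le hε1⟩
    rw [abs_of_nonpos (hanti.deriv_nonpos_of_mem_nhds (Ioc_mem_nhds ht1.1 ht1.2)),
      neg_mul, sub_neg_eq_add]
    exact hasDerivAt_two_mul_sqrt_mul (hdiff t (Ioo_subset_Ioc_self ht1)).hasDerivAt ht.1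
      (hpos t (Ioo_subset_Ioc_self ht1))
  have hg : ContinuousOn (fun t => √(Λ t / t)) (Ioc 0 ε) := fun t ht =>
    ((hdiff t (hsub ht)).continuousAt.div continuousAt_id ht.1.ne').sqrt.continuousWithinAt
  exact ⟨fun hgi => integrableOn_Ioc_subtrahend_of_hasDerivAt_sub hε.le hF hF'
      (hg.mono Ioo_subset_Ioc_self) hgi fun t _ => by positivity,
    integrableOn_Ioc_minuend_of_hasDerivAt_sub hε hF hF' hg fun t _ => Real.sqrt_nonneg _⟩

theorem stmt2_general
    (Λ : ℝ → ℝ)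
    (hpos : ∀ t ∈ Ioc (0:ℝ) 1, 0 < Λ t)
    (hanti : StrictAntiOn Λ (Ioc (0:ℝ) 1))
    (hdiff : ∀ t ∈ Ioc (0:ℝ) 1, DifferentiableAt ℝ Λ t)
    (hsmall : Tendsto (fun t => t * Λ t) (nhdsWithin 0 (Ioi 0)) (nhds 0)) :
    ((∃ ε > (0:ℝ), ε ≤ 1 ∧
        MeasureTheory.IntegrableOn (fun t => Real.sqrt (Λ t / t)) (Ioc 0 ε)) ↔
     (∃ ε > (0:ℝ), ε ≤ 1 ∧
        MeasureTheory.IntegrableOn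
          (fun t => |deriv Λ t| * Real.sqrt (t / Λ t)) (Ioc 0 ε))) :=
  exists_congr fun _ => and_congr_right fun hε => and_congr_right fun hε1 =>
    integrableOn_sqrt_div_iff hpos hanti.antitoneOn hdiff hsmall hε hε1

theorem stmt2
    (Λ : ℝ → ℝ)
    (hpos : ∀ t ∈ Ioc (0:ℝ) 1, 0 < Λ t)
    (hanti : StrictAntiOn Λ (Ioc (0:ℝ) 1))
    (hdiff : ∀ t ∈ Ioc (0:ℝ) 1, DifferentiableAt ℝ Λ t)
    (hinf : Tendsto Λ (nhdsWithin 0 (Ioi 0)) atTop)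
    (hsmall : Tendsto (fun t => t * Λ t) (nhdsWithin 0 (Ioi 0)) (nhds 0)) :
    ((∃ ε > (0:ℝ), ε ≤ 1 ∧
        MeasureTheory.IntegrableOn (fun t => Real.sqrt (Λ t / t)) (Ioc 0 ε)) ↔
     (∃ ε > (0:ℝ), ε ≤ 1 ∧
        MeasureTheory.IntegrableOn
          (fun t => |deriv Λ t| * Real.sqrt (t / Λ t)) (Ioc 0 ε))) :=
  stmt2_general Λ hpos hanti hdiff hsmall
end

section
/- For λ in the open unit disc with λ ≠ 0, let I_λ = { e^{iθ} : |arg(λ e^{-iθ})| < (1-|λ|)/2 } and c_λ^{-1} = ∫_{I_λ} (1-|λ|²)/|e^{iθ}-λ|² dθ. Then c_λ^{-1} ≥ 4/5, and consequently the outer function f_λ(z) = exp( c_λ · (1-|λ|²)/|1-λ|² · ∫_{I_λ} (e^{iθ}+z)/(e^{iθ}-z) dθ ) satisfies sup_{|z|<1} |f_λ(z)| ≤ exp( (5π/2) · (1-|λ|²)/|1-λ|² ). -/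
/-!
Write `r = ‖λ‖` and `φ = arg λ - θ`. Then
`‖e^{iθ} - λ‖² = (1 - r)² + 2r(1 - cos φ) ≤ (1 - r)² + rφ²`, which is at most `(5/4)(1 - r)²`
as soon as `|φ| ≤ (1 - r)/2`. So the Poisson kernel `(1 - r²)/‖e^{iθ} - λ‖²` is at least
`4/(5(1 - r))` on the shadow, an arc of length `1 - r` (read modulo `2π`, which periodicity
takes care of), and `c_λ⁻¹ ≥ 4/5`.

For the bound on `f_λ`, `log ‖f_λ(z)‖` is `c_λ (1 - r²)/‖1 - λ‖²` times the integral over the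
shadow of `Re ((e^{iθ} + z)/(e^{iθ} - z))`. This real part is the Poisson kernel of `z`: it is
nonnegative and has total mass `2π` over the circle.
-/

open Set Real Complex MeasureTheory

lemma exp_ofReal_mul_I_sub_ne_zero {w : ℂ} (hw : ‖w‖ < 1) (θ : ℝ) : exp (θ * I) - w ≠ 0 := by
  rw [sub_ne_zero]
  rintro rfl
  simp at hw

lemma periodic_exp_ofReal_mul_I : Function.Periodic (fun θ : ℝ => exp (θ * I)) (2 * π) :=
  fun θ => by simpa using exp_mul_I_periodic (θ : ℂ)

section Herglotz

variable {z : ℂ}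

lemma continuous_herglotz (hz : ‖z‖ < 1) :
    Continuous fun θ : ℝ => (exp (θ * I) + z) / (exp (θ * I) - z) :=
  (by fun_prop : Continuous fun θ : ℝ => exp (θ * I) + z).div (by fun_prop)
    (exp_ofReal_mul_I_sub_ne_zero hz)

lemma re_herglotz_nonneg (hz : ‖z‖ < 1) (θ : ℝ) :
    0 ≤ ((exp (θ * I) + z) / (exp (θ * I) - z)).re := by
  have h := le_re_herglotzRieszKernel (c := 0) (R := 1) (z := exp (θ * I)) (w := z)
    (by simp) (by simpa using hz)
  simp only [sub_zero] at h
  exact (div_nonneg (sub_nonneg.2 hz.le) (by positivity)).trans h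

lemma intervalIntegral_re_herglotz_eq_two_pi (hz : ‖z‖ < 1) :
    ∫ θ in -π..π, ((exp (θ * I) + z) / (exp (θ * I) - z)).re = 2 * π := by
  -- Poisson's formula for the constant harmonic function `1`
  have hmean :=
    (InnerProductSpace.harmonicOnNhd_const (1 : ℝ)).circleAverage_re_herglotzRieszKernel_smul
      (c := 0) (R := 1) (w := z) (by simpa using hz)
  have hper : Function.Periodic
      (fun θ : ℝ => ((exp (θ * I) + z) / (exp (θ * I) - z)).re) (2 * π) :=
    periodic_exp_ofReal_mul_I.comp fun w => ((w + z) / (w - z)).re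
  simp [Real.circleAverage_def, herglotzRieszKernel_def, circleMap_zero] at hmean
  have hshift := hper.intervalIntegral_add_eq (-π) 0
  rw [show -π + 2 * π = π by ring, zero_add] at hshift
  rw [hshift]
  field_simp at hmean
  rwa [mul_comm 2 π]

lemma setIntegral_re_herglotz_le_two_pi (hz : ‖z‖ < 1) {s : Set ℝ} (hs : s ⊆ Ioc (-π) π) :
    ∫ θ in s, ((exp (θ * I) + z) / (exp (θ * I) - z)).re ≤ 2 * π := by
  calc _ ≤ ∫ θ in Ioc (-π) π, ((exp (θ * I) + z) / (exp (θ * I) - z)).re :=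
        setIntegral_mono_set (continuous_re.comp (continuous_herglotz hz)).integrableOn_Ioc
          (ae_of_all _ fun θ => re_herglotz_nonneg hz θ) hs.eventuallyLE
    _ = 2 * π := by
        rw [← intervalIntegral.integral_of_le (by linarith [pi_pos]),
          intervalIntegral_re_herglotz_eq_two_pi hz]

lemma norm_exp_mul_setIntegral_herglotz_le (hz : ‖z‖ < 1) {s : Set ℝ}
    (hs : s ⊆ Ioc (-π) π) {c : ℝ} (hc : 0 ≤ c) :
    ‖exp (c * ∫ θ in s, (exp (θ * I) + z) / (exp (θ * I) - z))‖ ≤ Real.exp (c * (2 * π)) := by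
  have hre := integral_re ((continuous_herglotz hz).integrableOn_Ioc (μ := volume).mono_set hs)
  simp only [RCLike.re_to_complex] at hre
  rw [norm_exp, re_ofReal_mul, ← hre]
  gcongr
  exact setIntegral_re_herglotz_le_two_pi hz hs

end Herglotz

section Shadow

variable {l : ℂ}

lemma norm_one_sub_ofReal_mul_exp_sq_le {r : ℝ} (hr : 0 ≤ r) (φ : ℝ) :
    ‖1 - r * exp (φ * I)‖ ^ 2 ≤ (1 - r) ^ 2 + r * φ ^ 2 := by
  rw [← normSq_eq_norm_sq, normSq_apply]
  simp only [sub_re, sub_im, one_re, one_im, re_ofReal_mul, im_ofReal_mul, exp_ofReal_mul_I_re,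
    exp_ofReal_mul_I_im]
  nlinarith [one_sub_sq_div_two_le_cos (x := φ), Real.sin_sq_add_cos_sq φ]

lemma norm_exp_ofReal_mul_I_sub (l : ℂ) (θ : ℝ) :
    ‖exp (θ * I) - l‖ = ‖1 - ‖l‖ * exp (↑(arg l - θ) * I)‖ := by
  have h : exp (θ * I) - l = exp (θ * I) * (1 - ‖l‖ * exp (↑(arg l - θ) * I)) := by
    conv_lhs => rw [← norm_mul_exp_arg_mul_I l]
    rw [ofReal_sub, sub_mul, Complex.exp_sub]
    field_simp
  rw [h, norm_mul, norm_exp_ofReal_mul_I, one_mul]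

lemma arg_mul_exp_neg_mul_I (hl : l ≠ 0) {θ : ℝ} (hθ : arg l - θ ∈ Ioc (-π) π) :
    arg (l * exp (-θ * I)) = arg l - θ := by
  have h : l * exp (-θ * I) = ‖l‖ * exp ((arg l - θ : ℝ) * I) := by
    conv_lhs => rw [← norm_mul_exp_arg_mul_I l]
    rw [mul_assoc, ← Complex.exp_add]
    push_cast
    ring_nf
  rw [h, arg_real_mul _ (norm_pos_iff.2 hl), arg_exp_mul_I, toIocMod_eq_self]
  rwa [neg_add_eq_sub, show 2 * π - π = π by ring]

lemma div_le_poisson_of_abs_arg_sub_le (hl : ‖l‖ < 1) {θ : ℝ}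
    (hθ : |arg l - θ| ≤ (1 - ‖l‖) / 2) :
    4 / (5 * (1 - ‖l‖)) ≤ (1 - ‖l‖ ^ 2) / ‖exp (θ * I) - l‖ ^ 2 := by
  have hr := norm_nonneg l
  have hφ : (arg l - θ) ^ 2 ≤ ((1 - ‖l‖) / 2) ^ 2 := sq_le_sq' (abs_le.1 hθ).1 (abs_le.1 hθ).2
  have hnorm : ‖exp (θ * I) - l‖ ^ 2 ≤ 5 / 4 * (1 - ‖l‖) ^ 2 := by
    rw [norm_exp_ofReal_mul_I_sub]
    nlinarith [norm_one_sub_ofReal_mul_exp_sq_le hr (arg l - θ)]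
  have hpos : 0 < ‖exp (θ * I) - l‖ ^ 2 := by
    have := exp_ofReal_mul_I_sub_ne_zero hl θ
    positivity
  rw [div_le_div_iff₀ (by nlinarith) hpos]
  nlinarith

lemma periodic_indicator_shadow (l : ℂ) (δ : ℝ) :
    ({θ : ℝ | |arg (l * exp (-θ * I))| < δ}.indicator
      fun θ : ℝ => (1 - ‖l‖ ^ 2) / ‖exp (θ * I) - l‖ ^ 2).Periodic (2 * π) := by
  intro θ
  have h₁ : exp (↑(θ + 2 * π) * I) = exp (θ * I) := periodic_exp_ofReal_mul_I θ
  have h₂ : exp (-↑(θ + 2 * π) * I) = exp (-θ * I) := by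
    have := periodic_exp_ofReal_mul_I.sub_eq (-θ)
    push_cast at this ⊢
    rw [← this]
    ring_nf
  simp only [indicator, mem_ofPred_eq, h₁, h₂]

lemma Function.Periodic.intervalIntegral_le_of_le_add {f : ℝ → ℝ} {T : ℝ} (hf : f.Periodic T)
    (hf₀ : 0 ≤ f) (hfi : ∀ a b, IntervalIntegrable f volume a b) {u v : ℝ} (huv : u ≤ v)
    (hvT : v ≤ u + T) (t : ℝ) :
    ∫ x in u..v, f x ≤ ∫ x in t..t + T, f x := by
  rw [hf.intervalIntegral_add_eq t u]
  exact intervalIntegral.integral_mono_interval le_rfl huv hvT (ae_of_all _ hf₀) (hfi _ _)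

lemma four_fifths_le_setIntegral_poisson_shadow (hl : ‖l‖ < 1) (hl0 : l ≠ 0) :
    4 / 5 ≤ ∫ θ in {θ ∈ Ioc (-π) π | |arg (l * exp (-θ * I))| < (1 - ‖l‖) / 2},
      (1 - ‖l‖ ^ 2) / ‖exp (θ * I) - l‖ ^ 2 := by
  set δ := (1 - ‖l‖) / 2 with hδ
  set S := {θ : ℝ | |arg (l * exp (-θ * I))| < δ}
  set g := fun θ : ℝ => (1 - ‖l‖ ^ 2) / ‖exp (θ * I) - l‖ ^ 2
  have hδπ : δ < π := by linarith [norm_nonneg l, pi_gt_three]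
  have hS : MeasurableSet S := measurableSet_lt (by fun_prop) measurable_const
  have hg : Continuous g :=
    continuous_const.div (by fun_prop) fun θ => by
      have := exp_ofReal_mul_I_sub_ne_zero hl θ
      positivity
  have hg₀ : 0 ≤ g := fun θ =>
    div_nonneg (sub_nonneg.2 (pow_le_one₀ (norm_nonneg l) hl.le)) (sq_nonneg _)
  have hint : ∀ a b, IntervalIntegrable (S.indicator g) volume a b := fun a b =>
    ⟨hg.integrableOn_Ioc.indicator hS, hg.integrableOn_Ioc.indicator hS⟩
  have hlow : ∀ θ ∈ Ioo (arg l - δ) (arg l + δ), 4 / (5 * (1 - ‖l‖)) ≤ S.indicator g θ := by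
    rintro θ ⟨h₁, h₂⟩
    have hθ : |arg l - θ| < δ := abs_lt.2 ⟨by linarith, by linarith⟩
    have hθS : θ ∈ S := by
      show |arg (l * exp (-θ * I))| < δ
      rwa [arg_mul_exp_neg_mul_I hl0 ⟨by linarith, by linarith⟩]
    rw [indicator_of_mem hθS]
    exact div_le_poisson_of_abs_arg_sub_le hl hθ.le
  calc (4 : ℝ) / 5 = ∫ θ in (arg l - δ)..(arg l + δ), 4 / (5 * (1 - ‖l‖)) := by
        have : 1 - ‖l‖ ≠ 0 := by linarith
        simp only [intervalIntegral.integral_const, smul_eq_mul, hδ]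
        field_simp
        ring
    _ ≤ ∫ θ in (arg l - δ)..(arg l + δ), S.indicator g θ :=
        intervalIntegral.integral_mono_on_of_le_Ioo (by linarith) intervalIntegrable_const
          (hint _ _) hlow
    _ ≤ ∫ θ in -π..(-π + 2 * π), S.indicator g θ :=
        (periodic_indicator_shadow l δ).intervalIntegral_le_of_le_add
          (indicator_nonneg fun θ _ => hg₀ θ) hint (by linarith) (by linarith) _
    _ = ∫ θ in Ioc (-π) π ∩ S, g θ := by
        rw [intervalIntegral.integral_of_le (by linarith [pi_pos]), setIntegral_indicator hS,
          neg_add_eq_sub, show 2 * π - π = π by ring]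

end Shadow

theorem stmt5
    (l : ℂ) (hl : ‖l‖ < 1) (hl0 : l ≠ 0)
    (Il : Set ℝ)
    (hIl : Il = {θ ∈ Ioc (-π) π |
        |Complex.arg (l * Complex.exp (-θ * Complex.I))| < (1 - ‖l‖) / 2})
    (cinv : ℝ)
    (hcinv : cinv = ∫ θ in Il,
        (1 - ‖l‖ ^ 2) / ‖Complex.exp (θ * Complex.I) - l‖ ^ 2)
    (fl : ℂ → ℂ)
    (hfl : ∀ z : ℂ, fl z = Complex.exp
        (((cinv⁻¹ * ((1 - ‖l‖ ^ 2) / ‖1 - l‖ ^ 2) : ℝ) : ℂ) *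
          ∫ θ in Il, (Complex.exp (θ * Complex.I) + z) /
            (Complex.exp (θ * Complex.I) - z))) :
    cinv ≥ 4 / 5 ∧
      ∀ z : ℂ, ‖z‖ < 1 →
        ‖fl z‖ ≤
          Real.exp (5 * π / 2 * ((1 - ‖l‖ ^ 2) / ‖1 - l‖ ^ 2)) := by
  have hcinv_ge : cinv ≥ 4 / 5 := by
    rw [hcinv, hIl]
    exact four_fifths_le_setIntegral_poisson_shadow hl hl0
  refine ⟨hcinv_ge, fun z hz => ?_⟩
  set Q := (1 - ‖l‖ ^ 2) / ‖1 - l‖ ^ 2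
  have hQ : 0 ≤ Q := div_nonneg (sub_nonneg.2 (pow_le_one₀ (norm_nonneg l) hl.le)) (sq_nonneg _)
  have hcinv_inv : cinv⁻¹ ≤ 5 / 4 := by
    simpa using inv_anti₀ (by norm_num : (0 : ℝ) < 4 / 5) hcinv_ge
  rw [hfl, hIl]
  calc _ ≤ Real.exp (cinv⁻¹ * Q * (2 * π)) :=
        norm_exp_mul_setIntegral_herglotz_le hz (sep_subset _ _)
          (mul_nonneg (inv_nonneg.2 (by linarith)) hQ)
    _ ≤ Real.exp (5 * π / 2 * Q) := by
        have := mul_le_mul_of_nonneg_right hcinv_inv hQ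
        exact Real.exp_le_exp.2 (by nlinarith [pi_pos])
end

section
/- Let α > 0 and w(t) = log^{α/2}(1/t), and consider the Cantor-set counting: for each N ≥ 1 there are 2^N complementary intervals of length 3^{-N} of the ternary Cantor set in [0,1], and in each dyadic-like scale block [3^{s-N}, 2·3^{s-N}] (0 ≤ s < N) there are 2^s such intervals. Then the series ∑_{N≥1} ∑_{0 ≤ s < N, 3^{-s}(N-s)^{α/2} ≳ 1} 2^s · log⁺(3^{-s}(N-s)^{α/2}) / (N-s)^α is comparable to ∑_{N≥1} N^{ακ/2 − α}, where κ = log 2 / log 3; in particular it diverges if and only if α(1 − κ/2) ≤ 1. -/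
/-!
Write `X = 3^{-s} (N - s)^{α/2}` and `κ = log_3 2`, so that `2^s = (3^s)^κ`. Every nonzero term of
the inner sum has `3^s ≤ N^{α/2}/c`, i.e. `s ≤ σ(N) = log_3 (N^{α/2}/c) = O(log N)`; hence
`N - s ≥ N/2`, `2^s ≤ (N^{α/2}/c)^κ` and `log X ≤ (α/2) log N`, and summing over the `O(log N)`
admissible `s` gives `S(N) = O(log² N · N^{ακ/2 - α})`. Conversely the single scale
`s = ⌊log_3 ((N/2)^{α/2}/M)⌋` with `M = max(c, e)` has `X ≥ M`, so `log X ≥ 1` and already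
`S(N) ≳ 2^s / N^α ≳ N^{ακ/2 - α}`. The logarithmic loss does not affect convergence of a
p-series, so both series converge exactly when `ακ/2 - α < -1`.
-/

open Real Finset Filter Asymptotics

noncomputable def cantorRatio (α : ℝ) (N s : ℕ) : ℝ :=
  3 ^ (-(s : ℝ)) * ((N : ℝ) - s) ^ (α / 2)

noncomputable def cantorTerm (α c : ℝ) (N s : ℕ) : ℝ :=
  if c ≤ cantorRatio α N s then
    2 ^ s * log (max 1 (cantorRatio α N s)) / ((N : ℝ) - s) ^ α
  else 0

noncomputable def cantorSum (α c : ℝ) (N : ℕ) : ℝ :=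
  ∑ s ∈ range N, cantorTerm α c N s

/-- The real scale `s` at which `3^{-s} N^{α/2} = d`. -/
noncomputable def criticalScale (α d : ℝ) (N : ℕ) : ℝ :=
  logb 3 ((N : ℝ) ^ (α / 2) / d)

theorem rpow_rpow_logb {a b : ℝ} (hb : 0 < b) (hb1 : b ≠ 1) (ha : 0 < a) (t : ℝ) :
    (b ^ t) ^ logb b a = a ^ t := by
  rw [← rpow_mul hb.le, mul_comm, rpow_mul hb.le, rpow_logb hb hb1 ha]

theorem two_rpow_eq_three_rpow_rpow (t : ℝ) : (2 : ℝ) ^ t = ((3 : ℝ) ^ t) ^ logb 3 2 :=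
  (rpow_rpow_logb (by norm_num) (by norm_num) (by norm_num) t).symm

section Asymptotics

variable {α d : ℝ}

theorem logb_rpow_div_eq {a b : ℝ} (hd : 0 < d) {x : ℝ} (hx : 0 < x) :
    logb b (x ^ a / d) = (a * log x - log d) / log b := by
  rw [logb, log_div (by positivity) hd.ne', log_rpow hx]

theorem three_rpow_criticalScale_mul (hd : 0 < d) {N : ℕ} (hN : 0 < N) :
    (3 : ℝ) ^ criticalScale α d N * d = (N : ℝ) ^ (α / 2) := by
  rw [criticalScale, rpow_logb (by norm_num) (by norm_num) (by positivity),
    div_mul_cancel₀ _ hd.ne']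

theorem le_criticalScale_iff (hd : 0 < d) {N : ℕ} (hN : 0 < N) {x : ℝ} :
    x ≤ criticalScale α d N ↔ (3 : ℝ) ^ x * d ≤ (N : ℝ) ^ (α / 2) := by
  rw [criticalScale, le_logb_iff_rpow_le (by norm_num) (by positivity), le_div_iff₀ hd]

theorem criticalScale_isBigO_log (hd : 0 < d) :
    criticalScale α d =O[atTop] fun N : ℕ => log N := by
  have hreal : (fun x : ℝ => logb 3 (x ^ (α / 2) / d)) =O[atTop] log := by
    have hlin : (fun x => α / 2 / log 3 * log x - log d / log 3) =O[atTop] log :=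
      (isBigO_const_mul_self _ _ _).sub isLittleO_const_log_atTop.isBigO
    refine hlin.congr' ?_ EventuallyEq.rfl
    filter_upwards [eventually_gt_atTop 0] with x hx
    rw [logb_rpow_div_eq hd hx]
    ring
  exact hreal.comp_tendsto tendsto_natCast_atTop_atTop

theorem tendsto_criticalScale (hα : 0 < α) (hd : 0 < d) :
    Tendsto (criticalScale α d) atTop atTop := by
  have hreal : Tendsto (fun x : ℝ => logb 3 (x ^ (α / 2) / d)) atTop atTop := by
    have hlin : Tendsto (fun x => α / 2 / log 3 * log x + -(log d / log 3)) atTop atTop :=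
      tendsto_atTop_add_const_right _ _ (tendsto_log_atTop.const_mul_atTop (by positivity))
    refine hlin.congr' ?_
    filter_upwards [eventually_gt_atTop 0] with x hx
    rw [logb_rpow_div_eq hd hx]
    ring
  exact hreal.comp tendsto_natCast_atTop_atTop

theorem eventually_two_mul_criticalScale_le (hd : 0 < d) :
    ∀ᶠ N : ℕ in atTop, 2 * criticalScale α d N ≤ N := by
  have hlittle : criticalScale α d =o[atTop] fun N : ℕ => (N : ℝ) :=
    (criticalScale_isBigO_log hd).trans_isLittleO
      (isLittleO_log_id_atTop.comp_tendsto tendsto_natCast_atTop_atTop)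
  filter_upwards [hlittle.bound (by norm_num : (0 : ℝ) < 1 / 2)] with N hN
  rw [Real.norm_eq_abs, Real.norm_natCast] at hN
  linarith [le_abs_self (criticalScale α d N)]

end Asymptotics

theorem summable_log_mul_log_mul_rpow {β : ℝ} (hβ : β < -1) :
    Summable fun n : ℕ => log n * (log n * (n : ℝ) ^ β) := by
  set δ := (-1 - β) / 2
  have hδ : 0 < δ := by simp only [δ]; linarith
  have hreal : (fun x : ℝ => log x * (log x * x ^ β)) =O[atTop]
      fun x => x ^ (δ / 2 + (δ / 2 + β)) := by
    have hlog := (isLittleO_log_rpow_atTop (half_pos hδ)).isBigO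
    refine (hlog.mul (hlog.mul (isBigO_refl _ _))).congr' EventuallyEq.rfl ?_
    filter_upwards [eventually_gt_atTop 0] with x hx
    rw [rpow_add hx, rpow_add hx]
  refine summable_of_isBigO_nat (summable_nat_rpow.2 ?_)
    (hreal.comp_tendsto tendsto_natCast_atTop_atTop)
  simp only [δ]
  linarith

section Terms

variable {α c : ℝ} {N s : ℕ}

theorem cantorTerm_nonneg (hs : s ≤ N) : 0 ≤ cantorTerm α c N s := by
  have hNs : (0 : ℝ) ≤ N - s := sub_nonneg.2 (by exact_mod_cast hs)
  unfold cantorTerm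
  split_ifs
  · exact div_nonneg (mul_nonneg (by positivity) (log_nonneg (le_max_left _ _)))
      (rpow_nonneg hNs _)
  · exact le_rfl

theorem cantorSum_nonneg (α c : ℝ) (N : ℕ) : 0 ≤ cantorSum α c N :=
  sum_nonneg fun _ hs => cantorTerm_nonneg (mem_range.1 hs).le

theorem cantorRatio_le (hα : 0 ≤ α) (hs : s ≤ N) :
    cantorRatio α N s ≤ 3 ^ (-(s : ℝ)) * (N : ℝ) ^ (α / 2) := by
  have hNs : (0 : ℝ) ≤ N - s := sub_nonneg.2 (by exact_mod_cast hs)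
  exact mul_le_mul_of_nonneg_left
    (rpow_le_rpow hNs (sub_le_self _ s.cast_nonneg) (by positivity)) (by positivity)

theorem three_rpow_mul_le_of_le_cantorRatio (hα : 0 ≤ α) (hs : s ≤ N)
    (h : c ≤ cantorRatio α N s) : (3 : ℝ) ^ (s : ℝ) * c ≤ (N : ℝ) ^ (α / 2) := by
  have h' := h.trans (cantorRatio_le hα hs)
  rw [rpow_neg (by norm_num), inv_mul_eq_div, le_div_iff₀ (by positivity)] at h'
  linarith

theorem cantorTerm_le (hα : 0 < α) (hc : 0 < c) (hsN : s < N) (h2s : 2 * s ≤ N) :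
    cantorTerm α c N s ≤
      2 ^ α * (α / 2) / c ^ logb 3 2 * (log N * (N : ℝ) ^ (α * logb 3 2 / 2 - α)) := by
  have hN : (0 : ℝ) < N := by exact_mod_cast (s.zero_le.trans_lt hsN)
  have hN1 : (1 : ℝ) ≤ N := by exact_mod_cast (s.zero_le.trans_lt hsN)
  have hNs : (N : ℝ) / 2 ≤ N - s := by
    have : (2 : ℝ) * s ≤ N := by exact_mod_cast h2s
    linarith
  have hκ : 0 ≤ logb 3 2 := logb_nonneg (by norm_num) (by norm_num)
  have hbound : 2 ^ α * (α / 2) / c ^ logb 3 2 * (log N * (N : ℝ) ^ (α * logb 3 2 / 2 - α)) =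
      ((N : ℝ) ^ (α / 2) / c) ^ logb 3 2 * (α / 2 * log N) / ((N : ℝ) / 2) ^ α := by
    rw [div_rpow (by positivity) hc.le, ← rpow_mul hN.le, div_rpow hN.le (by norm_num),
      rpow_sub hN, show α / 2 * logb 3 2 = α * logb 3 2 / 2 by ring]
    field_simp
  unfold cantorTerm
  split_ifs with h
  · rw [hbound]
    have h2 : (2 : ℝ) ^ s ≤ ((N : ℝ) ^ (α / 2) / c) ^ logb 3 2 := by
      rw [← rpow_natCast, two_rpow_eq_three_rpow_rpow]
      exact rpow_le_rpow (by positivity)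
        ((le_div_iff₀ hc).2 (three_rpow_mul_le_of_le_cantorRatio hα.le hsN.le h)) hκ
    have hlog : log (max 1 (cantorRatio α N s)) ≤ α / 2 * log N := by
      rw [← log_rpow hN]
      refine log_le_log (by positivity) (max_le (one_le_rpow hN1 (by positivity)) ?_)
      refine (cantorRatio_le hα.le hsN.le).trans (mul_le_of_le_one_left (by positivity) ?_)
      exact rpow_le_one_of_one_le_of_nonpos (by norm_num) (by simp)
    exact div_le_div₀ (by positivity)
      (mul_le_mul h2 hlog (log_nonneg (le_max_left _ _)) (by positivity)) (by positivity)
      (rpow_le_rpow (by positivity) hNs hα.le)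
  · have := log_natCast_nonneg N
    positivity

theorem cantorSum_le (hα : 0 < α) (hc : 0 < c) (hσ : 2 * ⌊criticalScale α c N⌋₊ ≤ N) :
    cantorSum α c N ≤ (⌊criticalScale α c N⌋₊ + 1) *
      (2 ^ α * (α / 2) / c ^ logb 3 2 * (log N * (N : ℝ) ^ (α * logb 3 2 / 2 - α))) := by
  set n := ⌊criticalScale α c N⌋₊
  set B := 2 ^ α * (α / 2) / c ^ logb 3 2 * (log N * (N : ℝ) ^ (α * logb 3 2 / 2 - α))
  have hsupp : ∀ s ∈ range N, cantorTerm α c N s ≠ 0 → s ≤ n := by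
    intro s hs hne
    have hsN := mem_range.1 hs
    have hcond : c ≤ cantorRatio α N s := by
      by_contra hlt
      exact hne (if_neg hlt)
    refine Nat.le_floor ((le_criticalScale_iff hc (s.zero_le.trans_lt hsN)).2 ?_)
    exact three_rpow_mul_le_of_le_cantorRatio hα.le hsN.le hcond
  have hterm : ∀ s ∈ {s ∈ range N | s ≤ n}, cantorTerm α c N s ≤ B := by
    intro s hs
    obtain ⟨hsN, hsn⟩ := mem_filter.1 hs
    exact cantorTerm_le hα hc (mem_range.1 hsN) (by omega)
  have hcard : #{s ∈ range N | s ≤ n} ≤ n + 1 := by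
    simpa using card_le_card (fun s hs => mem_range.2 (Nat.lt_succ_of_le (mem_filter.1 hs).2) :
      {s ∈ range N | s ≤ n} ⊆ range (n + 1))
  have hB : 0 ≤ B := by
    have := log_natCast_nonneg N
    positivity
  calc cantorSum α c N = ∑ s ∈ range N with s ≤ n, cantorTerm α c N s :=
        (sum_filter_of_ne hsupp).symm
    _ ≤ #{s ∈ range N | s ≤ n} • B := sum_le_card_nsmul _ _ _ hterm
    _ ≤ (n + 1) * B := by
        rw [nsmul_eq_mul]
        gcongr
        exact_mod_cast hcard

theorem le_cantorTerm_floor {M x : ℝ} (hα : 0 ≤ α) (hcM : c ≤ M) (hM : exp 1 ≤ M) (hN : 0 < N)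
    (hx0 : 0 ≤ x) (hxN : 2 * x ≤ N) (hx : (3 : ℝ) ^ x * M ≤ ((N : ℝ) / 2) ^ (α / 2)) :
    (2 : ℝ) ^ x / 2 / (N : ℝ) ^ α ≤ cantorTerm α c N ⌊x⌋₊ := by
  set s := ⌊x⌋₊
  have hsx : (s : ℝ) ≤ x := Nat.floor_le hx0
  have hxs : x < s + 1 := Nat.lt_floor_add_one x
  have hNr : (0 : ℝ) < N := by exact_mod_cast hN
  have hNs : (N : ℝ) / 2 ≤ N - s := by linarith
  have hMX : M ≤ cantorRatio α N s :=
    calc M = 3 ^ (-x) * (3 ^ x * M) := by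
          rw [← mul_assoc, ← rpow_add (by norm_num), neg_add_cancel, rpow_zero, one_mul]
      _ ≤ 3 ^ (-(s : ℝ)) * ((N : ℝ) - s) ^ (α / 2) :=
          mul_le_mul (rpow_le_rpow_of_exponent_le (by norm_num) (by linarith))
            (hx.trans (rpow_le_rpow (by positivity) hNs (by positivity)))
            (mul_pos (by positivity) ((exp_pos 1).trans_le hM)).le (by positivity)
  have hX1 : 1 ≤ cantorRatio α N s := (one_le_exp zero_le_one).trans (hM.trans hMX)
  have hlog : 1 ≤ log (cantorRatio α N s) := by
    rw [le_log_iff_exp_le (by linarith)]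
    exact hM.trans hMX
  unfold cantorTerm
  rw [if_pos (hcM.trans hMX), max_eq_right hX1]
  calc (2 : ℝ) ^ x / 2 / (N : ℝ) ^ α = 2 ^ (x - 1) / (N : ℝ) ^ α := by
        rw [rpow_sub_one two_ne_zero]
    _ ≤ 2 ^ s * log (cantorRatio α N s) / ((N : ℝ) - s) ^ α := by
        refine div_le_div₀ (by positivity) ?_ (rpow_pos_of_pos (by linarith) _)
          (rpow_le_rpow (by linarith) (sub_le_self _ s.cast_nonneg) hα)
        calc (2 : ℝ) ^ (x - 1) ≤ 2 ^ (s : ℝ) :=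
              rpow_le_rpow_of_exponent_le (by norm_num) (by linarith)
          _ = 2 ^ s := rpow_natCast 2 s
          _ ≤ 2 ^ s * log (cantorRatio α N s) := le_mul_of_one_le_right (by positivity) hlog

end Terms

theorem cantorSum_isBigO {α c : ℝ} (hα : 0 < α) (hc : 0 < c) :
    cantorSum α c =O[atTop]
      fun N : ℕ => log N * (log N * (N : ℝ) ^ (α * logb 3 2 / 2 - α)) := by
  set B := 2 ^ α * (α / 2) / c ^ logb 3 2
  have hfloor : (fun N : ℕ => (⌊criticalScale α c N⌋₊ : ℝ) + 1) =O[atTop]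
      fun N : ℕ => log N := by
    refine IsBigO.add ?_
      (isLittleO_const_log_atTop.isBigO.comp_tendsto tendsto_natCast_atTop_atTop)
    refine IsBigO.trans (IsBigO.of_bound 1 ?_) (criticalScale_isBigO_log (α := α) hc)
    filter_upwards [(tendsto_criticalScale hα hc).eventually_ge_atTop 0] with N hN
    rw [one_mul, Real.norm_natCast, Real.norm_of_nonneg hN]
    exact Nat.floor_le hN
  have hsum : cantorSum α c =O[atTop] fun N : ℕ => ((⌊criticalScale α c N⌋₊ : ℝ) + 1) *
      (B * (log N * (N : ℝ) ^ (α * logb 3 2 / 2 - α))) := by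
    refine IsBigO.of_bound 1 ?_
    filter_upwards [(tendsto_criticalScale hα hc).eventually_ge_atTop 0,
      eventually_two_mul_criticalScale_le hc] with N hN h2N
    have hle := cantorSum_le hα hc (N := N) (by
      have := Nat.floor_le hN
      exact_mod_cast (show (2 : ℝ) * ⌊criticalScale α c N⌋₊ ≤ N by linarith))
    have hnonneg := cantorSum_nonneg α c N
    rw [one_mul, Real.norm_of_nonneg hnonneg, Real.norm_of_nonneg (hnonneg.trans hle)]
    exact hle
  exact hsum.trans (hfloor.mul (isBigO_const_mul_self _ _ _))

theorem rpow_isBigO_cantorSum {α c : ℝ} (hα : 0 < α) (hc : 0 < c) :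
    (fun N : ℕ => (N : ℝ) ^ (α * logb 3 2 / 2 - α)) =O[atTop] cantorSum α c := by
  set M := max c (exp 1)
  set d := M * 2 ^ (α / 2)
  have hd : 0 < d := by positivity
  refine IsBigO.of_bound (2 * d ^ logb 3 2) ?_
  filter_upwards [eventually_gt_atTop 0, (tendsto_criticalScale hα hd).eventually_ge_atTop 0,
    eventually_two_mul_criticalScale_le hd] with N hN hx0 hxN
  set x := criticalScale α d N
  have hNr : (0 : ℝ) < N := by exact_mod_cast hN
  have hx : (3 : ℝ) ^ x * M = ((N : ℝ) / 2) ^ (α / 2) := by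
    rw [div_rpow hNr.le (by norm_num), ← three_rpow_criticalScale_mul hd hN, eq_div_iff
      (by positivity), mul_assoc]
  have h2x : (2 : ℝ) ^ x = (N : ℝ) ^ (α * logb 3 2 / 2) / d ^ logb 3 2 := by
    rw [two_rpow_eq_three_rpow_rpow,
      eq_div_of_mul_eq hd.ne' (three_rpow_criticalScale_mul hd hN), div_rpow (by positivity) hd.le,
      ← rpow_mul hNr.le, div_mul_eq_mul_div]
  have hterm := le_cantorTerm_floor hα.le (le_max_left c (exp 1)) (le_max_right c (exp 1))
    hN hx0 hxN hx.le
  have hsum : cantorTerm α c N ⌊x⌋₊ ≤ cantorSum α c N :=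
    single_le_sum (fun s hs => cantorTerm_nonneg (mem_range.1 hs).le)
      (mem_range.2 (by
        have := Nat.floor_le hx0
        exact_mod_cast (show (⌊x⌋₊ : ℝ) < N by linarith)))
  have hpow : (N : ℝ) ^ (α * logb 3 2 / 2 - α) =
      2 * d ^ logb 3 2 * (2 ^ x / 2 / (N : ℝ) ^ α) := by
    rw [h2x, rpow_sub hNr]
    field_simp
  rw [Real.norm_of_nonneg (by positivity), Real.norm_of_nonneg (cantorSum_nonneg α c N), hpow]
  gcongr
  exact hterm.trans hsum

theorem stmt17
    (α : ℝ) (hα : 0 < α)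
    (κ : ℝ) (hκ : κ = Real.log 2 / Real.log 3)
    (c : ℝ) (hc : 0 < c)
    (S : ℕ → ℝ)
    (hS : ∀ N : ℕ, S N = ∑ s ∈ Finset.range N,
        if c ≤ (3:ℝ) ^ (-(s:ℝ)) * ((N:ℝ) - s) ^ (α / 2) then
          (2:ℝ) ^ (s:ℕ) *
            Real.log (max 1 ((3:ℝ) ^ (-(s:ℝ)) * ((N:ℝ) - s) ^ (α / 2))) /
            ((N:ℝ) - s) ^ α
        else 0) :
    (Summable S ↔ Summable (fun N : ℕ => (N:ℝ) ^ (α * κ / 2 - α))) ∧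
    (¬ Summable S ↔ α * (1 - κ / 2) ≤ 1) := by
  rw [log_div_log] at hκ
  subst hκ
  obtain rfl : S = cantorSum α c := funext hS
  have hsummable : Summable (cantorSum α c) ↔
      Summable fun N : ℕ => (N : ℝ) ^ (α * logb 3 2 / 2 - α) :=
    ⟨fun h => summable_of_isBigO_nat h (rpow_isBigO_cantorSum hα hc),
      fun h => summable_of_isBigO_nat (summable_log_mul_log_mul_rpow (summable_nat_rpow.1 h))
        (cantorSum_isBigO hα hc)⟩
  refine ⟨hsummable, ?_⟩
  rw [hsummable, summable_nat_rpow, not_lt]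
  have hexp : α * (1 - logb 3 2 / 2) = α - α * logb 3 2 / 2 := by ring
  constructor <;> intro h <;> linarith
end
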